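/- (Model 2b3c5a) Define vector fields on ℝ⁴ (coordinates (x,y,u,v)) by e₁ = ∂x + 2x∂u + 3u∂v, e₂ = ∂y, e₃ = x∂x + 2u∂u + 3v∂v, e₄ = x∂y, e₅ = y∂y, e₆ = u∂y, e₇ = v∂y, and let S = {(x, y, x², x³) : (x,y) ∈ ℝ²}. Then: (i) each of e₁,…,e₇ is tangent to S; (ii) at every point of S the first two components of e₁ and e₂ are (1,0) and (0,1), so S is affinely homogeneous; (iii) with bracket [X,Y](p) = (DY)(p)(X(p)) − (DX)(p)(Y(p)) one has [e₁,e₃] = e₁, [e₁,e₄] = e₂, [e₁,e₆] = 2·e₄, [e₁,e₇] = 3·e₆, [e₂,e₅] = e₂, [e₃,e₄] = e₄, [e₃,e₆] = 2·e₆, [e₃,e₇] = 3·e₇, [e₄,e₅] = e₄, [e₅,e₆] = −e₆, [e₅,e₇] = −e₇, and [e₁,e₂] = 0. -/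

import Mathlib

/-! All seven fields are affine, `q ↦ M q + a`, so `DX` is the constant matrix `M` and
`[X, Y](p) = N X(p) − M Y(p)`: the bracket relations are matrix arithmetic. Since `F` and `G`
depend on `x` only, tangency to `S` says `X³ = 2x X¹` and `X⁴ = 3x² X¹` along `S`. -/

namespace Model2b3c5a

/-- Lie bracket of vector fields on `ℝ⁴`, `[X,Y](p) = DY(p)(X(p)) − DX(p)(Y(p))`. -/
noncomputable def lieBracket (X Y : (Fin 4 → ℝ) → Fin 4 → ℝ) :
    (Fin 4 → ℝ) → Fin 4 → ℝ :=
  fun p => fderiv ℝ Y p (X p) - fderiv ℝ X p (Y p)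

/-- Tangency of a vector field `X` on `ℝ⁴ ∋ (x,y,u,v)` to the graph
`S = {(x, y, F(x,y), G(x,y))}`. -/
def TangentToGraph (F G : ℝ × ℝ → ℝ) (X : (Fin 4 → ℝ) → Fin 4 → ℝ) : Prop :=
  ∀ p : ℝ × ℝ,
    X ![p.1, p.2, F p, G p] 2
        = fderiv ℝ F p (1, 0) * X ![p.1, p.2, F p, G p] 0
          + fderiv ℝ F p (0, 1) * X ![p.1, p.2, F p, G p] 1 ∧
    X ![p.1, p.2, F p, G p] 3
        = fderiv ℝ G p (1, 0) * X ![p.1, p.2, F p, G p] 0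
          + fderiv ℝ G p (0, 1) * X ![p.1, p.2, F p, G p] 1

/-- `u = x²`. -/
noncomputable def F : ℝ × ℝ → ℝ := fun p => p.1 ^ 2
/-- `v = x³`. -/
noncomputable def G : ℝ × ℝ → ℝ := fun p => p.1 ^ 3

/-- `e₁ = ∂x + 2x∂u + 3u∂v`. -/
noncomputable def e₁ : (Fin 4 → ℝ) → Fin 4 → ℝ := fun p => ![1, 0, 2 * p 0, 3 * p 2]
/-- `e₂ = ∂y`. -/
noncomputable def e₂ : (Fin 4 → ℝ) → Fin 4 → ℝ := fun _ => ![0, 1, 0, 0]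
/-- `e₃ = x∂x + 2u∂u + 3v∂v`. -/
noncomputable def e₃ : (Fin 4 → ℝ) → Fin 4 → ℝ := fun p => ![p 0, 0, 2 * p 2, 3 * p 3]
/-- `e₄ = x∂y`. -/
noncomputable def e₄ : (Fin 4 → ℝ) → Fin 4 → ℝ := fun p => ![0, p 0, 0, 0]
/-- `e₅ = y∂y`. -/
noncomputable def e₅ : (Fin 4 → ℝ) → Fin 4 → ℝ := fun p => ![0, p 1, 0, 0]
/-- `e₆ = u∂y`. -/
noncomputable def e₆ : (Fin 4 → ℝ) → Fin 4 → ℝ := fun p => ![0, p 2, 0, 0]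
/-- `e₇ = v∂y`. -/
noncomputable def e₇ : (Fin 4 → ℝ) → Fin 4 → ℝ := fun p => ![0, p 3, 0, 0]

open Matrix

theorem hasFDerivAt_mulVec_add {m n : Type*} [Fintype m] [Fintype n]
    (M : Matrix m n ℝ) (a : m → ℝ) (p : n → ℝ) :
    HasFDerivAt (fun q => M *ᵥ q + a) M.mulVecLin.toContinuousLinearMap p :=
  M.mulVecLin.toContinuousLinearMap.hasFDerivAt.add_const a

theorem lieBracket_of_affine {X Y : (Fin 4 → ℝ) → Fin 4 → ℝ} {M N : Matrix (Fin 4) (Fin 4) ℝ}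
    {a b : Fin 4 → ℝ} (hX : X = fun q => M *ᵥ q + a) (hY : Y = fun q => N *ᵥ q + b) :
    lieBracket X Y = fun p => N *ᵥ X p - M *ᵥ Y p := by
  funext p
  have hDX := hX ▸ hasFDerivAt_mulVec_add M a p
  have hDY := hY ▸ hasFDerivAt_mulVec_add N b p
  simp only [lieBracket, hDX.fderiv, hDY.fderiv]
  rfl

theorem tangentToGraph_comp_fst_iff {f g : ℝ → ℝ} (hf : Differentiable ℝ f)
    (hg : Differentiable ℝ g) (X : (Fin 4 → ℝ) → Fin 4 → ℝ) :
    TangentToGraph (f ∘ Prod.fst) (g ∘ Prod.fst) X ↔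
      ∀ x y : ℝ, X ![x, y, f x, g x] 2 = deriv f x * X ![x, y, f x, g x] 0 ∧
        X ![x, y, f x, g x] 3 = deriv g x * X ![x, y, f x, g x] 0 := by
  have hD : ∀ {h : ℝ → ℝ}, Differentiable ℝ h → ∀ p : ℝ × ℝ,
      fderiv ℝ (h ∘ Prod.fst) p = deriv h p.1 • ContinuousLinearMap.fst ℝ ℝ ℝ :=
    fun hh p => ((hh p.1).hasDerivAt.comp_hasFDerivAt p hasFDerivAt_fst).fderiv
  simp [TangentToGraph, hD hf, hD hg, Prod.forall]

theorem tangentToGraph_F_G_iff (X : (Fin 4 → ℝ) → Fin 4 → ℝ) :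
    TangentToGraph F G X ↔ ∀ x y : ℝ,
      X ![x, y, x ^ 2, x ^ 3] 2 = 2 * x * X ![x, y, x ^ 2, x ^ 3] 0 ∧
        X ![x, y, x ^ 2, x ^ 3] 3 = 3 * x ^ 2 * X ![x, y, x ^ 2, x ^ 3] 0 :=
  (tangentToGraph_comp_fst_iff (differentiable_pow 2) (differentiable_pow 3) X).trans (by simp)

theorem tangentToGraph_e :
    TangentToGraph F G e₁ ∧ TangentToGraph F G e₂ ∧ TangentToGraph F G e₃ ∧
      TangentToGraph F G e₄ ∧ TangentToGraph F G e₅ ∧ TangentToGraph F G e₆ ∧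
      TangentToGraph F G e₇ := by
  simp only [tangentToGraph_F_G_iff]
  refine ⟨?_, ?_, ?_, ?_, ?_, ?_, ?_⟩ <;> intro x y <;> constructor <;>
    simp [e₁, e₂, e₃, e₄, e₅, e₆, e₇] <;> ring

theorem e₁_eq_affine :
    e₁ = fun q => !![0, 0, 0, 0; 0, 0, 0, 0; 2, 0, 0, 0; 0, 0, 3, 0] *ᵥ q + ![1, 0, 0, 0] := by
  funext q i
  fin_cases i <;> simp [e₁, vecHead, vecTail]

theorem e₂_eq_affine : e₂ = fun q => (0 : Matrix (Fin 4) (Fin 4) ℝ) *ᵥ q + ![0, 1, 0, 0] := by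
  funext q
  simp [e₂]

theorem e₃_eq_affine :
    e₃ = fun q => !![1, 0, 0, 0; 0, 0, 0, 0; 0, 0, 2, 0; 0, 0, 0, 3] *ᵥ q + 0 := by
  funext q i
  fin_cases i <;> simp [e₃, vecHead, vecTail]

theorem e₄_eq_affine :
    e₄ = fun q => !![0, 0, 0, 0; 1, 0, 0, 0; 0, 0, 0, 0; 0, 0, 0, 0] *ᵥ q + 0 := by
  funext q i
  fin_cases i <;> simp [e₄, vecHead, vecTail]

theorem e₅_eq_affine :
    e₅ = fun q => !![0, 0, 0, 0; 0, 1, 0, 0; 0, 0, 0, 0; 0, 0, 0, 0] *ᵥ q + 0 := by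
  funext q i
  fin_cases i <;> simp [e₅, vecHead, vecTail]

theorem e₆_eq_affine :
    e₆ = fun q => !![0, 0, 0, 0; 0, 0, 1, 0; 0, 0, 0, 0; 0, 0, 0, 0] *ᵥ q + 0 := by
  funext q i
  fin_cases i <;> simp [e₆, vecHead, vecTail]

theorem e₇_eq_affine :
    e₇ = fun q => !![0, 0, 0, 0; 0, 0, 0, 1; 0, 0, 0, 0; 0, 0, 0, 0] *ᵥ q + 0 := by
  funext q i
  fin_cases i <;> simp [e₇, vecHead, vecTail]

theorem lieBracket_e :
    lieBracket e₁ e₃ = e₁ ∧ lieBracket e₁ e₄ = e₂ ∧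
      lieBracket e₁ e₆ = (2 : ℝ) • e₄ ∧ lieBracket e₁ e₇ = (3 : ℝ) • e₆ ∧
      lieBracket e₂ e₅ = e₂ ∧ lieBracket e₃ e₄ = e₄ ∧
      lieBracket e₃ e₆ = (2 : ℝ) • e₆ ∧ lieBracket e₃ e₇ = (3 : ℝ) • e₇ ∧
      lieBracket e₄ e₅ = e₄ ∧ lieBracket e₅ e₆ = -e₆ ∧ lieBracket e₅ e₇ = -e₇ ∧
      lieBracket e₁ e₂ = 0 := by
  rw [lieBracket_of_affine e₁_eq_affine e₃_eq_affine,
    lieBracket_of_affine e₁_eq_affine e₄_eq_affine,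
    lieBracket_of_affine e₁_eq_affine e₆_eq_affine,
    lieBracket_of_affine e₁_eq_affine e₇_eq_affine,
    lieBracket_of_affine e₂_eq_affine e₅_eq_affine,
    lieBracket_of_affine e₃_eq_affine e₄_eq_affine,
    lieBracket_of_affine e₃_eq_affine e₆_eq_affine,
    lieBracket_of_affine e₃_eq_affine e₇_eq_affine,
    lieBracket_of_affine e₄_eq_affine e₅_eq_affine,
    lieBracket_of_affine e₅_eq_affine e₆_eq_affine,
    lieBracket_of_affine e₅_eq_affine e₇_eq_affine,
    lieBracket_of_affine e₁_eq_affine e₂_eq_affine]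
  refine ⟨?_, ?_, ?_, ?_, ?_, ?_, ?_, ?_, ?_, ?_, ?_, ?_⟩ <;> funext p i <;> fin_cases i <;>
    simp [e₁, e₂, e₃, e₄, e₅, e₆, e₇] <;> ring

/-- **Model 2b3c5a:** the surface `{u = x², v = x³}` is affinely homogeneous, with the
seven tangent affine vector fields `e₁, …, e₇` satisfying the stated bracket relations. -/
theorem model_2b3c5a :
    (TangentToGraph F G e₁ ∧ TangentToGraph F G e₂ ∧ TangentToGraph F G e₃ ∧
      TangentToGraph F G e₄ ∧ TangentToGraph F G e₅ ∧ TangentToGraph F G e₆ ∧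
      TangentToGraph F G e₇) ∧
    (∀ p : ℝ × ℝ,
      e₁ ![p.1, p.2, F p, G p] 0 = 1 ∧ e₁ ![p.1, p.2, F p, G p] 1 = 0 ∧
      e₂ ![p.1, p.2, F p, G p] 0 = 0 ∧ e₂ ![p.1, p.2, F p, G p] 1 = 1 ∧
      LinearIndependent ℝ
        ![((e₁ ![p.1, p.2, F p, G p] 0, e₁ ![p.1, p.2, F p, G p] 1) : ℝ × ℝ),
          ((e₂ ![p.1, p.2, F p, G p] 0, e₂ ![p.1, p.2, F p, G p] 1) : ℝ × ℝ)]) ∧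
    (lieBracket e₁ e₃ = e₁ ∧ lieBracket e₁ e₄ = e₂ ∧
      lieBracket e₁ e₆ = (2 : ℝ) • e₄ ∧ lieBracket e₁ e₇ = (3 : ℝ) • e₆ ∧
      lieBracket e₂ e₅ = e₂ ∧ lieBracket e₃ e₄ = e₄ ∧
      lieBracket e₃ e₆ = (2 : ℝ) • e₆ ∧ lieBracket e₃ e₇ = (3 : ℝ) • e₇ ∧
      lieBracket e₄ e₅ = e₄ ∧ lieBracket e₅ e₆ = -e₆ ∧ lieBracket e₅ e₇ = -e₇ ∧
      lieBracket e₁ e₂ = 0) := by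
  refine ⟨tangentToGraph_e, fun p => ⟨rfl, rfl, rfl, rfl, ?_⟩, lieBracket_e⟩
  simp [e₁, e₂, LinearIndependent.pair_iff]

end Model2b3c5a
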